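/- Let d ≥ 2, let T be the d-regular rooted tree and let Q, P be subgroups of Sym(d) with 1 ≠ Q normal in P. Then FPP(G_Q^P) = (1/[P : Q]) · Σ_{A ∈ P/Q} FPP(W_A), where the sum runs over the cosets A of Q in P and all the limits defining the fixed-point proportions exist. In particular, FPP(G_Q^P) > 0 if and only if FPP(W_A) > 0 for at least one coset A ∈ P/Q. -/

import Mathlib

open Filter Polynomial

namespace TreePaper

/-- Vertices of the regular rooted tree over alphabet `X`: finite words. -/
abbrev V (X : Type*) := List X

variable {X : Type*}

/-- A permutation of the vertex set fixes the root and preserves adjacency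
(sends children of `v` to children of the image of `v`). -/
def IsTreeHom (g : Equiv.Perm (V X)) : Prop :=
  g [] = [] ∧ ∀ (v : V X) (a : X), ∃ b : X, g (v ++ [a]) = g v ++ [b]

lemma IsTreeHom.mul {g h : Equiv.Perm (V X)} (hg : IsTreeHom g) (hh : IsTreeHom h) :
    IsTreeHom (g * h) := by
  constructor
  · simp only [Equiv.Perm.mul_apply, hh.1, hg.1]
  · intro v a
    obtain ⟨b, hb⟩ := hh.2 v a
    obtain ⟨c, hc⟩ := hg.2 (h v) b
    exact ⟨c, by simp only [Equiv.Perm.mul_apply, hb, hc]⟩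

lemma IsTreeHom.one : IsTreeHom (1 : Equiv.Perm (V X)) :=
  ⟨rfl, fun _ a => ⟨a, rfl⟩⟩

/-- The automorphism group of the regular rooted tree with alphabet `X`,
realized as a subgroup of the permutations of the vertex set. -/
def AutT (X : Type*) : Subgroup (Equiv.Perm (V X)) where
  carrier := {g | IsTreeHom g ∧ IsTreeHom g⁻¹}
  one_mem' := ⟨IsTreeHom.one, by rw [inv_one]; exact IsTreeHom.one⟩
  mul_mem' := by
    intro a b ha hb
    exact ⟨ha.1.mul hb.1, by rw [mul_inv_rev]; exact hb.2.mul ha.2⟩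
  inv_mem' := by
    intro a ha
    exact ⟨ha.2, by rw [inv_inv]; exact ha.1⟩

/-- Restriction of the action of `g` to the `n`-th level of the tree. -/
def res (n : ℕ) (g : Equiv.Perm (V X)) : {v : V X // v.length = n} → V X :=
  fun v => g v.1

/-- `π_n(G)`: the set of actions of elements of `G` on the `n`-th level
(equivalently, on the first `n` levels). -/
def piSet (G : Set (Equiv.Perm (V X))) (n : ℕ) : Set ({v : V X // v.length = n} → V X) :=
  res n '' G

/-- The elements of `π_n(G)` fixing at least one vertex of level `n`. -/
def fixSet (G : Set (Equiv.Perm (V X))) (n : ℕ) :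
    Set ({v : V X // v.length = n} → V X) :=
  {f | f ∈ piSet G n ∧ ∃ v : {v : V X // v.length = n}, f v = v.1}

/-- The sequence `p_n` whose limit is the fixed-point proportion `FPP(G)`. -/
noncomputable def FPPseq (G : Set (Equiv.Perm (V X))) (n : ℕ) : ℝ :=
  ((fixSet G n).ncard : ℝ) / ((piSet G n).ncard : ℝ)

/-- Hausdorff dimension of a subgroup (or subset) of `Aut(T)`. -/
noncomputable def hausdorffDim (G : Set (Equiv.Perm (V X))) : ℝ :=
  Filter.liminf (fun n : ℕ =>
    Real.log ((piSet G n).ncard) /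
      Real.log ((piSet (AutT X : Set (Equiv.Perm (V X))) n).ncard)) Filter.atTop

/-- `σ` is the label `g|_v^1` of `g` at the vertex `v`. -/
def HasLabel (g : Equiv.Perm (V X)) (v : V X) (σ : Equiv.Perm X) : Prop :=
  ∀ a : X, g (v ++ [a]) = g v ++ [σ a]

/-- The (generalized) iterated wreath product `W_S` of a set `S` of permutations:
all tree automorphisms all of whose labels lie in `S`. -/
def WS (S : Set (Equiv.Perm X)) : Set (Equiv.Perm (V X)) :=
  {g | g ∈ AutT X ∧ ∀ v : V X, ∃ σ ∈ S, HasLabel g v σ}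

/-- The group `G_Q^P`: tree automorphisms whose labels lie in `P` and any two of
whose labels lie in the same coset of `Q`. -/
def GQP (Q P : Subgroup (Equiv.Perm X)) : Set (Equiv.Perm (V X)) :=
  {g | g ∈ AutT X ∧ (∀ v : V X, ∃ σ ∈ P, HasLabel g v σ) ∧
    ∀ (v w : V X) (σ τ : Equiv.Perm X), HasLabel g v σ → HasLabel g w τ → σ * τ⁻¹ ∈ Q}

/-- `G` acts transitively on every level of the tree. -/
def LevelTransitive (G : Set (Equiv.Perm (V X))) : Prop :=
  ∀ v w : V X, v.length = w.length → ∃ g ∈ G, g v = w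

/-- The section (as a function) of `g` at the vertex `v`. -/
def sectionMap (g : Equiv.Perm (V X)) (v : V X) : V X → V X :=
  fun w => (g (v ++ w)).drop v.length

/-- `G` is self-similar: all sections of elements of `G` belong to `G`. -/
def SelfSimilar (G : Set (Equiv.Perm (V X))) : Prop :=
  ∀ g ∈ G, ∀ v : V X, ∃ h ∈ G, ∀ w : V X, h w = sectionMap g v w

/-- `K` has finite index in `G` (finitely many left cosets of `K` cover `G`). -/
def FiniteIndexIn (K G : Set (Equiv.Perm (V X))) : Prop :=
  ∃ F : Finset (Equiv.Perm (V X)), ∀ g ∈ G, ∃ t ∈ F, ∃ k ∈ K, g = t * k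

/-- The geometric product `K_1`: elements of the first level stabilizer all of whose
first-level sections lie in `K`. -/
def geomProd (K : Set (Equiv.Perm (V X))) : Set (Equiv.Perm (V X)) :=
  {g | g ∈ AutT X ∧ (∀ a : X, g [a] = [a]) ∧
    ∀ a : X, ∃ h ∈ K, ∀ w : V X, h w = sectionMap g [a] w}

/-- `G` is regular branch over `K`. -/
def RegularBranchOver (G K : Set (Equiv.Perm (V X))) : Prop :=
  LevelTransitive G ∧ K ⊆ G ∧ geomProd K ⊆ K ∧
    FiniteIndexIn (geomProd K) K ∧ FiniteIndexIn K G

/-- `G` is regular branch (over some subgroup). -/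
def RegularBranch (G : Set (Equiv.Perm (V X))) : Prop :=
  ∃ K : Set (Equiv.Perm (V X)), RegularBranchOver G K

/-- `G` is closed in `Aut(T)` for the profinite topology. -/
def IsClosedSub (G : Set (Equiv.Perm (V X))) : Prop :=
  ∀ g ∈ AutT X, (∀ n : ℕ, ∃ h ∈ G, res n h = res n g) → g ∈ G

/-- `D_S(k)`: the number of permutations in `S` fixing exactly `k` points. -/
def DS {d : ℕ} (S : Finset (Equiv.Perm (Fin d))) (k : ℕ) : ℕ :=
  (S.filter fun σ => (Finset.univ.filter fun x => σ x = x).card = k).card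

/-- The characteristic polynomial `f_S` of a set of permutations `S`. -/
noncomputable def charPoly {d : ℕ} (S : Finset (Equiv.Perm (Fin d))) : Polynomial ℝ :=
  ∑ k ∈ Finset.Icc 1 d,
    Polynomial.C ((DS S k : ℝ) / (S.card : ℝ)) * (1 - (1 - Polynomial.X) ^ k)


def phi (f : V X → Equiv.Perm X) : V X → V X
  | [] => []
  | a :: w => f [] a :: phi (fun v => f (a :: v)) w

def psi (f : V X → Equiv.Perm X) : V X → V X
  | [] => []
  | b :: w => (f [])⁻¹ b :: psi (fun v => f ((f [])⁻¹ b :: v)) w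

@[simp] lemma phi_nil (f : V X → Equiv.Perm X) : phi f [] = [] := rfl
@[simp] lemma phi_cons (f : V X → Equiv.Perm X) (a : X) (w : V X) :
    phi f (a :: w) = f [] a :: phi (fun v => f (a :: v)) w := rfl
@[simp] lemma psi_nil (f : V X → Equiv.Perm X) : psi f [] = [] := rfl
@[simp] lemma psi_cons (f : V X → Equiv.Perm X) (b : X) (w : V X) :
    psi f (b :: w) = (f [])⁻¹ b :: psi (fun v => f ((f [])⁻¹ b :: v)) w := rfl

lemma phi_length (w : V X) : ∀ f : V X → Equiv.Perm X, (phi f w).length = w.length := by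
  induction w with
  | nil => intro f; rfl
  | cons a w ih => intro f; simp [ih]

lemma phi_append (u : V X) : ∀ (f : V X → Equiv.Perm X) (e : V X),
    phi f (u ++ e) = phi f u ++ phi (fun v => f (u ++ v)) e := by
  induction u with
  | nil => intro f e; simp
  | cons a u ih => intro f e; simp [ih]

lemma phi_concat (f : V X → Equiv.Perm X) (u : V X) (a : X) :
    phi f (u ++ [a]) = phi f u ++ [f u a] := by
  rw [phi_append]; simp

lemma phi_congr (w : V X) : ∀ {f f' : V X → Equiv.Perm X},
    (∀ v : V X, v.length < w.length → f v = f' v) → phi f w = phi f' w := by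
  induction w with
  | nil => intro f f' _; rfl
  | cons a w ih =>
    intro f f' h
    simp only [phi_cons]
    rw [h [] (by simp), ih (fun v hv => h (a :: v) (by simpa using hv))]

lemma phi_psi (w : V X) : ∀ f : V X → Equiv.Perm X, phi f (psi f w) = w := by
  induction w with
  | nil => intro f; rfl
  | cons b w ih => intro f; simp [ih]

lemma psi_phi (w : V X) : ∀ f : V X → Equiv.Perm X, psi f (phi f w) = w := by
  induction w with
  | nil => intro f; rfl
  | cons a w ih => intro f; simp [ih]

def portPerm (f : V X → Equiv.Perm X) : Equiv.Perm (V X) :=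
  ⟨phi f, psi f, fun w => psi_phi w f, fun w => phi_psi w f⟩

@[simp] lemma portPerm_apply (f : V X → Equiv.Perm X) (w : V X) : portPerm f w = phi f w := rfl
@[simp] lemma portPerm_inv_apply (f : V X → Equiv.Perm X) (w : V X) :
    (portPerm f)⁻¹ w = psi f w := rfl

lemma portPerm_hasLabel (f : V X → Equiv.Perm X) (v : V X) : HasLabel (portPerm f) v (f v) :=
  fun a => phi_concat f v a

lemma portPerm_isTreeHom (f : V X → Equiv.Perm X) : IsTreeHom (portPerm f) :=
  ⟨rfl, fun v a => ⟨f v a, phi_concat f v a⟩⟩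

lemma portPerm_inv_isTreeHom (f : V X → Equiv.Perm X) : IsTreeHom (portPerm f)⁻¹ := by
  refine ⟨rfl, fun v b => ⟨(f (psi f v))⁻¹ b, ?_⟩⟩
  have h1 : phi f (psi f v ++ [(f (psi f v))⁻¹ b]) = v ++ [b] := by
    rw [phi_concat, phi_psi]; simp
  have h2 := congrArg (psi f) h1
  rw [psi_phi] at h2
  show psi f (v ++ [b]) = psi f v ++ _
  exact h2.symm

lemma label_unique {g : Equiv.Perm (V X)} {v : V X} {σ τ : Equiv.Perm X}
    (h1 : HasLabel g v σ) (h2 : HasLabel g v τ) : σ = τ := by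
  ext a
  have := (h1 a).symm.trans (h2 a)
  have := List.append_cancel_left this
  simpa using this

lemma portPerm_mem_AutT (f : V X → Equiv.Perm X) : portPerm f ∈ AutT X :=
  ⟨portPerm_isTreeHom f, portPerm_inv_isTreeHom f⟩

/-- An automorphism agreeing with a portrait everywhere equals `portPerm` of it. -/
lemma eq_portPerm {g : Equiv.Perm (V X)} (hroot : g [] = [])
    {f : V X → Equiv.Perm X} (hf : ∀ v, HasLabel g v (f v)) : g = portPerm f := by
  have key : ∀ w : V X, g w = phi f w := by
    intro w
    induction w using List.reverseRecOn with
    | nil => simpa using hroot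
    | append_singleton v a ih => rw [hf v a, ih, phi_concat]
  exact Equiv.ext key

lemma exists_label [Finite X] {g : Equiv.Perm (V X)} (hg : g ∈ AutT X) (v : V X) :
    ∃ σ : Equiv.Perm X, HasLabel g v σ := by
  classical
  have h := hg.1.2
  choose b hb using h
  have hinj : Function.Injective (b v) := by
    intro a a' haa
    have : g (v ++ [a]) = g (v ++ [a']) := by rw [hb v a, hb v a', haa]
    have := g.injective this
    simpa using this
  exact ⟨Equiv.ofBijective (b v) (Finite.injective_iff_bijective.mp hinj),
    fun a => hb v a⟩

lemma WS_eq (S : Set (Equiv.Perm X)) :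
    WS S = (fun f : V X → Equiv.Perm X => portPerm f) '' {f | ∀ v, f v ∈ S} := by
  ext g
  constructor
  · rintro ⟨hAut, hlab⟩
    choose f hfS hfl using hlab
    exact ⟨f, hfS, (eq_portPerm hAut.1.1 hfl).symm⟩
  · rintro ⟨f, hf, rfl⟩
    exact ⟨portPerm_mem_AutT f, fun v => ⟨f v, hf v, portPerm_hasLabel f v⟩⟩

section Cosets
variable {Q P : Subgroup (Equiv.Perm X)}

/-- The subset of `Sym(X)` corresponding to the coset `c ∈ P/Q`. -/
def cosetSet (Q P : Subgroup (Equiv.Perm X)) (c : P ⧸ Q.subgroupOf P) : Set (Equiv.Perm X) :=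
  {σ : Equiv.Perm X | ∃ h : σ ∈ P, (QuotientGroup.mk (⟨σ, h⟩ : P) : P ⧸ Q.subgroupOf P) = c}

lemma cosetSet_nonempty (c : P ⧸ Q.subgroupOf P) : (cosetSet Q P c).Nonempty := by
  obtain ⟨x, rfl⟩ := QuotientGroup.mk_surjective c
  exact ⟨x.1, x.2, by simp⟩

lemma cosetSet_subset (c : P ⧸ Q.subgroupOf P) : cosetSet Q P c ⊆ (P : Set (Equiv.Perm X)) :=
  fun σ hσ => hσ.1

lemma cosetSet_eq_of_mem {c c' : P ⧸ Q.subgroupOf P} {σ : Equiv.Perm X}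
    (h : σ ∈ cosetSet Q P c) (h' : σ ∈ cosetSet Q P c') : c = c' := by
  obtain ⟨hp, rfl⟩ := h
  obtain ⟨hp', rfl⟩ := h'
  rfl

lemma mem_cosetSet_iff {c : P ⧸ Q.subgroupOf P} {σ₀ : Equiv.Perm X} (h₀ : σ₀ ∈ P)
    (hc : (QuotientGroup.mk (⟨σ₀, h₀⟩ : P) : P ⧸ Q.subgroupOf P) = c) (τ : Equiv.Perm X) :
    τ ∈ cosetSet Q P c ↔ ∃ hτ : τ ∈ P, σ₀⁻¹ * τ ∈ Q := by
  subst hc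
  constructor
  · rintro ⟨hτ, hq⟩
    refine ⟨hτ, ?_⟩
    have := (QuotientGroup.eq (s := Q.subgroupOf P)).mp hq.symm
    simpa [Subgroup.mem_subgroupOf] using this
  · rintro ⟨hτ, hq⟩
    refine ⟨hτ, ?_⟩
    symm
    rw [QuotientGroup.eq]
    simpa [Subgroup.mem_subgroupOf] using hq

lemma cosetSet_eq_image (hQP : Q ≤ P) {c : P ⧸ Q.subgroupOf P} {σ₀ : Equiv.Perm X}
    (h₀ : σ₀ ∈ P) (hc : (QuotientGroup.mk (⟨σ₀, h₀⟩ : P) : P ⧸ Q.subgroupOf P) = c) :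
    cosetSet Q P c = (fun q => σ₀ * q) '' (Q : Set (Equiv.Perm X)) := by
  ext τ
  rw [mem_cosetSet_iff h₀ hc]
  constructor
  · rintro ⟨hτ, hq⟩
    exact ⟨σ₀⁻¹ * τ, hq, by group⟩
  · rintro ⟨q, hq, rfl⟩
    rw [SetLike.mem_coe] at hq
    exact ⟨P.mul_mem h₀ (hQP hq), by simp [hq]⟩

lemma cosetSet_ncard (hQP : Q ≤ P) (c : P ⧸ Q.subgroupOf P) :
    (cosetSet Q P c).ncard = (Q : Set (Equiv.Perm X)).ncard := by
  obtain ⟨σ₀, h₀, hc⟩ := cosetSet_nonempty c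
  rw [cosetSet_eq_image hQP h₀ hc]
  exact Set.ncard_image_of_injective _ (mul_right_injective σ₀)

lemma GQP_eq_iUnion (hQP : Q ≤ P)
    (hnorm : ∀ p ∈ P, ∀ q ∈ Q, p * q * p⁻¹ ∈ Q) :
    GQP Q P = ⋃ c : P ⧸ Q.subgroupOf P, WS (cosetSet Q P c) := by
  ext g
  simp only [Set.mem_iUnion]
  constructor
  · rintro ⟨hAut, hlab, hpair⟩
    choose f hfP hfl using hlab
    refine ⟨QuotientGroup.mk ⟨f [], hfP []⟩, hAut, fun v => ⟨f v, ?_, hfl v⟩⟩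
    rw [mem_cosetSet_iff (hfP []) rfl]
    refine ⟨hfP v, ?_⟩
    have h1 : f [] * (f v)⁻¹ ∈ Q := hpair [] v _ _ (hfl []) (hfl v)
    have h2 : f v * (f [])⁻¹ ∈ Q := by
      have := Q.inv_mem h1
      have e : (f [] * (f v)⁻¹)⁻¹ = f v * (f [])⁻¹ := by group
      rwa [e] at this
    have h3 := hnorm _ (P.inv_mem (hfP [])) _ h2
    have e2 : (f [])⁻¹ * (f v * (f [])⁻¹) * ((f [])⁻¹)⁻¹ = (f [])⁻¹ * f v := by group
    rwa [e2] at h3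
  · rintro ⟨c, hAut, hlab⟩
    refine ⟨hAut, fun v => ?_, fun v w σ τ hσ hτ => ?_⟩
    · obtain ⟨σ, hσc, hσl⟩ := hlab v
      exact ⟨σ, cosetSet_subset c hσc, hσl⟩
    · obtain ⟨σ', hσc, hσl⟩ := hlab v
      obtain ⟨τ', hτc, hτl⟩ := hlab w
      cases label_unique hσ hσl
      cases label_unique hτ hτl
      obtain ⟨σ₀, h₀, hc⟩ := cosetSet_nonempty c
      obtain ⟨hσP, hσq⟩ := (mem_cosetSet_iff h₀ hc σ).mp hσc
      obtain ⟨hτP, hτq⟩ := (mem_cosetSet_iff h₀ hc τ).mp hτc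
      have h1 : (σ₀⁻¹ * σ) * (σ₀⁻¹ * τ)⁻¹ ∈ Q := Q.mul_mem hσq (Q.inv_mem hτq)
      have h2 := hnorm σ₀ h₀ _ h1
      have e : σ₀ * ((σ₀⁻¹ * σ) * (σ₀⁻¹ * τ)⁻¹) * σ₀⁻¹ = σ * τ⁻¹ := by group
      rwa [e] at h2

end Cosets

section Model
variable [Finite X] [Nonempty X]

/-- Two portraits inducing the same level-`n` action agree on levels `< n`
(as do the induced actions on levels `≤ n`). -/
lemma phi_eq_of_level {n : ℕ} {f f' : V X → Equiv.Perm X}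
    (h : ∀ v : V X, v.length = n → phi f v = phi f' v) :
    ∀ w : V X, w.length ≤ n → phi f w = phi f' w := by
  intro w hw
  obtain ⟨x0⟩ := ‹Nonempty X›
  have hlen : (w ++ List.replicate (n - w.length) x0).length = n := by
    simp; omega
  have h2 := h _ hlen
  rw [phi_append, phi_append] at h2
  exact List.append_inj_left h2 (by rw [phi_length, phi_length])

lemma port_eq_of_level {n : ℕ} {f f' : V X → Equiv.Perm X}
    (h : ∀ v : V X, v.length = n → phi f v = phi f' v) :
    ∀ v : V X, v.length < n → f v = f' v := by
  intro v hv
  ext a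
  have h1 : phi f (v ++ [a]) = phi f' (v ++ [a]) :=
    phi_eq_of_level h _ (by simp; omega)
  rw [phi_concat, phi_concat, phi_eq_of_level h v (by omega)] at h1
  have := List.append_cancel_left h1
  simpa using this

/-- Extension of a level-`< n` portrait by a default permutation. -/
def extP (s0 : Equiv.Perm X) (n : ℕ) (p : {v : V X // v.length < n} → Equiv.Perm X) :
    V X → Equiv.Perm X :=
  fun v => if h : v.length < n then p ⟨v, h⟩ else s0

/-- The level-`n` action of the automorphism defined by a level-`< n` portrait. -/
def theta (s0 : Equiv.Perm X) (n : ℕ) (p : {v : V X // v.length < n} → Equiv.Perm X) :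
    {v : V X // v.length = n} → V X :=
  fun v => phi (extP s0 n p) v.1

/-- The model for `π_n(W_S)`: level-`< n` portraits with values in `S`. -/
def ES (S : Set (Equiv.Perm X)) (n : ℕ) :
    Set ({v : V X // v.length < n} → Equiv.Perm X) :=
  {p | ∀ v, p v ∈ S}

/-- The model for the fixed-point part. -/
def FixM (s0 : Equiv.Perm X) (S : Set (Equiv.Perm X)) (n : ℕ) :
    Set ({v : V X // v.length < n} → Equiv.Perm X) :=
  {p | p ∈ ES S n ∧ ∃ v : {v : V X // v.length = n}, theta s0 n p v = v.1}

instance finLevelLt (n : ℕ) : Finite {v : V X // v.length < n} :=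
  (List.finite_length_lt X n).to_subtype

instance finLevelEq (n : ℕ) : Finite {v : V X // v.length = n} :=
  (List.finite_length_eq X n).to_subtype

lemma theta_injOn (s0 s0' : Equiv.Perm X) (n : ℕ)
    {p p' : {v : V X // v.length < n} → Equiv.Perm X}
    (h : theta s0 n p = theta s0' n p') : p = p' := by
  funext v
  have := port_eq_of_level (f := extP s0 n p) (f' := extP s0' n p')
    (fun w hw => congrFun h ⟨w, hw⟩) v.1 v.2
  rwa [extP, extP, dif_pos v.2, dif_pos v.2] at this

lemma theta_eq_res (s0 : Equiv.Perm X) (n : ℕ)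
    (p : {v : V X // v.length < n} → Equiv.Perm X) :
    theta s0 n p = res n (portPerm (extP s0 n p)) := rfl

lemma bijOn_theta {S : Set (Equiv.Perm X)} {s0 : Equiv.Perm X} (hs0 : s0 ∈ S) (n : ℕ) :
    Set.BijOn (theta s0 n) (ES S n) (piSet (WS S) n) := by
  refine ⟨fun p hp => ?_, fun p _ p' _ h => theta_injOn s0 s0 n h, fun F hF => ?_⟩
  · refine ⟨portPerm (extP s0 n p), ?_, rfl⟩
    rw [WS_eq]
    refine ⟨extP s0 n p, fun v => ?_, rfl⟩
    rw [extP]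
    split
    · exact hp _
    · exact hs0
  · obtain ⟨g, hg, rfl⟩ := hF
    rw [WS_eq] at hg
    obtain ⟨f, hf, rfl⟩ := hg
    refine ⟨fun v => f v.1, fun v => hf _, ?_⟩
    funext v
    show phi (extP s0 n _) v.1 = phi f v.1
    refine phi_congr _ (fun u hu => ?_)
    rw [v.2] at hu
    rw [extP, dif_pos hu]

lemma bijOn_theta_fix {S : Set (Equiv.Perm X)} {s0 : Equiv.Perm X} (hs0 : s0 ∈ S) (n : ℕ) :
    Set.BijOn (theta s0 n) (FixM s0 S n) (fixSet (WS S) n) := by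
  obtain ⟨hmaps, hinj, hsurj⟩ := bijOn_theta hs0 n
  refine ⟨fun p hp => ⟨hmaps hp.1, hp.2⟩, fun p hp p' hp' h => hinj hp.1 hp'.1 h,
    fun F hF => ?_⟩
  obtain ⟨p, hp, rfl⟩ := hsurj hF.1
  exact ⟨p, ⟨hp, hF.2⟩, rfl⟩

lemma ncard_pi_mem {ι α : Type*} [Finite ι] (S : Set α) :
    {p : ι → α | ∀ i, p i ∈ S}.ncard = S.ncard ^ Nat.card ι := by
  classical
  have := Fintype.ofFinite ι
  rw [← Nat.card_coe_set_eq, ← Nat.card_coe_set_eq]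
  have e : {p : ι → α | ∀ i, p i ∈ S} ≃ ∀ _ : ι, S := Equiv.subtypePiEquivPi
  rw [Nat.card_congr e, Nat.card_pi, Finset.prod_const, Finset.card_univ]
  congr 1
  exact Nat.card_eq_fintype_card.symm

lemma ncard_piSet_WS {S : Set (Equiv.Perm X)} (hS : S.Nonempty) (n : ℕ) :
    (piSet (WS S) n).ncard = S.ncard ^ Nat.card {v : V X // v.length < n} := by
  obtain ⟨s0, hs0⟩ := hS
  rw [← (bijOn_theta hs0 n).image_eq,
    Set.ncard_image_of_injOn (bijOn_theta hs0 n).injOn]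
  exact ncard_pi_mem S

lemma ncard_fixSet_WS {S : Set (Equiv.Perm X)} {s0 : Equiv.Perm X} (hs0 : s0 ∈ S) (n : ℕ) :
    (fixSet (WS S) n).ncard = (FixM s0 S n).ncard := by
  rw [← (bijOn_theta_fix hs0 n).image_eq,
    Set.ncard_image_of_injOn (bijOn_theta_fix hs0 n).injOn]

end Model

section Counting
variable [Finite X] [Nonempty X]

def levelSplit (n : ℕ) : {v : V X // v.length < n + 1} ≃
    {v : V X // v.length < n} ⊕ {v : V X // v.length = n} where
  toFun v := if h : v.1.length < n then Sum.inl ⟨v.1, h⟩ else Sum.inr ⟨v.1, by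
    have := v.2; omega⟩
  invFun := Sum.elim (fun v => ⟨v.1, by have := v.2; omega⟩) (fun v => ⟨v.1, by
    have := v.2; omega⟩)
  left_inv v := by by_cases h : v.1.length < n <;> simp [h]
  right_inv v := by
    cases v with
    | inl v => simp [v.2]
    | inr v => have := v.2; simp [this]

lemma card_level_split (n : ℕ) :
    Nat.card {v : V X // v.length < n + 1} =
      Nat.card {v : V X // v.length < n} + Nat.card {v : V X // v.length = n} := by
  rw [Nat.card_congr (levelSplit n), Nat.card_sum]

lemma ncard_prod {α β : Type*} (A : Set α) (B : Set β) :
    (A ×ˢ B).ncard = A.ncard * B.ncard := by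
  rw [← Nat.card_coe_set_eq, ← Nat.card_coe_set_eq, ← Nat.card_coe_set_eq,
    Nat.card_congr (Equiv.Set.prod A B), Nat.card_prod]

lemma ncard_FixM_succ {S : Set (Equiv.Perm X)} {s0 : Equiv.Perm X} (hs0 : s0 ∈ S) (n : ℕ) :
    (FixM s0 S (n + 1)).ncard ≤
      (FixM s0 S n).ncard * S.ncard ^ Nat.card {v : V X // v.length = n} := by
  classical
  set ρ : ({v : V X // v.length < n + 1} → Equiv.Perm X) →
      ({v : V X // v.length < n} → Equiv.Perm X) :=
    fun p v => p ⟨v.1, Nat.lt_succ_of_lt v.2⟩ with hρ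
  set τf : ({v : V X // v.length < n + 1} → Equiv.Perm X) →
      ({v : V X // v.length = n} → Equiv.Perm X) :=
    fun p v => p ⟨v.1, by have := v.2; omega⟩ with hτ
  have hinj : Function.Injective (fun p => (ρ p, τf p)) := by
    intro p p' h
    have h1 := congrArg Prod.fst h
    have h2 := congrArg Prod.snd h
    simp only at h1 h2
    funext v
    by_cases hv : v.1.length < n
    · have := congrFun h1 ⟨v.1, hv⟩
      simpa [hρ] using this
    · have hv' : v.1.length = n := by have := v.2; omega
      have := congrFun h2 ⟨v.1, hv'⟩
      simpa [hτ] using this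
  have hmaps : ∀ p ∈ FixM s0 S (n + 1),
      (ρ p, τf p) ∈ (FixM s0 S n) ×ˢ {q : {v : V X // v.length = n} → Equiv.Perm X |
        ∀ v, q v ∈ S} := by
    rintro p ⟨hpS, v, hv⟩
    have hphi : ∀ w : V X, w.length ≤ n → phi (extP s0 n (ρ p)) w = phi (extP s0 (n+1) p) w := by
      intro w hw
      refine phi_congr _ (fun u hu => ?_)
      have hu' : u.length < n := lt_of_lt_of_le hu hw
      simp only [extP, dif_pos hu', dif_pos (Nat.lt_succ_of_lt hu'), hρ]
    refine ⟨⟨fun w => hpS _, ?_⟩, fun w => hpS _⟩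
    -- the fixed vertex at level n
    have hlen : (v.1.take n).length = n := by rw [List.length_take, v.2]; omega
    refine ⟨⟨v.1.take n, hlen⟩, ?_⟩
    have hsplit : v.1.take n ++ v.1.drop n = v.1 := List.take_append_drop n v.1
    have h1 : phi (extP s0 (n+1) p) (v.1.take n ++ v.1.drop n) = v.1.take n ++ v.1.drop n := by
      rw [hsplit]; exact hv
    rw [phi_append] at h1
    have h2 : phi (extP s0 (n+1) p) (v.1.take n) = v.1.take n :=
      List.append_inj_left h1 (by rw [phi_length])
    show phi (extP s0 n (ρ p)) (v.1.take n) = v.1.take n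
    rw [hphi _ (le_of_eq hlen), h2]
  calc (FixM s0 S (n + 1)).ncard
      = ((fun p => (ρ p, τf p)) '' FixM s0 S (n + 1)).ncard :=
        (Set.ncard_image_of_injective _ hinj).symm
    _ ≤ ((FixM s0 S n) ×ˢ {q : {v : V X // v.length = n} → Equiv.Perm X |
          ∀ v, q v ∈ S}).ncard := by
        refine Set.ncard_le_ncard ?_ (Set.toFinite _)
        rintro _ ⟨p, hp, rfl⟩
        exact hmaps p hp
    _ = _ := by rw [ncard_prod, ncard_pi_mem]

lemma FPPseq_WS_antitone {S : Set (Equiv.Perm X)} (hS : S.Nonempty) :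
    Antitone (FPPseq (WS S)) := by
  obtain ⟨s0, hs0⟩ := hS
  apply antitone_nat_of_succ_le
  intro n
  have hk : 0 < S.ncard := (Set.ncard_pos (Set.toFinite _)).mpr ⟨s0, hs0⟩
  set k := S.ncard
  set m := Nat.card {v : V X // v.length < n}
  set t := Nat.card {v : V X // v.length = n}
  have hpi1 : (piSet (WS S) (n+1)).ncard = k ^ (m + t) := by
    rw [ncard_piSet_WS ⟨s0, hs0⟩, card_level_split]
  have hpi0 : (piSet (WS S) n).ncard = k ^ m := ncard_piSet_WS ⟨s0, hs0⟩ n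
  have hfix1 : (fixSet (WS S) (n+1)).ncard ≤ (fixSet (WS S) n).ncard * k ^ t := by
    rw [ncard_fixSet_WS hs0, ncard_fixSet_WS hs0]
    exact ncard_FixM_succ hs0 n
  rw [FPPseq, FPPseq, hpi1, hpi0]
  have hkR : (0:ℝ) < (k:ℝ) := by exact_mod_cast hk
  have hpow : ∀ j : ℕ, (0:ℝ) < (k:ℝ) ^ j := fun j => pow_pos hkR j
  rw [div_le_div_iff₀ (by exact_mod_cast hpow (m+t)) (by exact_mod_cast hpow m)]
  push_cast
  have hcast : ((fixSet (WS S) (n+1)).ncard : ℝ) ≤ ((fixSet (WS S) n).ncard : ℝ) * (k:ℝ) ^ t := by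
    exact_mod_cast hfix1
  calc ((fixSet (WS S) (n+1)).ncard : ℝ) * (k:ℝ) ^ m
      ≤ ((fixSet (WS S) n).ncard : ℝ) * (k:ℝ) ^ t * (k:ℝ) ^ m :=
        mul_le_mul_of_nonneg_right hcast (le_of_lt (hpow m))
    _ = ((fixSet (WS S) n).ncard : ℝ) * (k:ℝ) ^ (m + t) := by ring
  
lemma FPPseq_nonneg (G : Set (Equiv.Perm (V X))) (n : ℕ) : 0 ≤ FPPseq G n :=
  div_nonneg (Nat.cast_nonneg _) (Nat.cast_nonneg _)

lemma FPPseq_WS_tendsto {S : Set (Equiv.Perm X)} (hS : S.Nonempty) :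
    Filter.Tendsto (FPPseq (WS S)) Filter.atTop (nhds (⨅ n, FPPseq (WS S) n)) :=
  tendsto_atTop_ciInf (FPPseq_WS_antitone hS)
    ⟨0, fun x hx => by obtain ⟨n, rfl⟩ := hx; exact FPPseq_nonneg _ n⟩

end Counting

section Union
variable [Finite X] [Nonempty X]

lemma piSet_iUnion {ι : Type*} (G : ι → Set (Equiv.Perm (V X))) (n : ℕ) :
    piSet (⋃ i, G i) n = ⋃ i, piSet (G i) n := Set.image_iUnion

lemma fixSet_iUnion {ι : Type*} (G : ι → Set (Equiv.Perm (V X))) (n : ℕ) :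
    fixSet (⋃ i, G i) n = ⋃ i, fixSet (G i) n := by
  ext F
  simp only [fixSet, Set.mem_setOf_eq, piSet_iUnion, Set.mem_iUnion]
  tauto

lemma piSet_WS_disjoint {Q P : Subgroup (Equiv.Perm X)} {n : ℕ} (hn : 1 ≤ n)
    {c c' : P ⧸ Q.subgroupOf P} (hcc : c ≠ c') :
    Disjoint (piSet (WS (cosetSet Q P c)) n) (piSet (WS (cosetSet Q P c')) n) := by
  rw [Set.disjoint_left]
  rintro F ⟨g, hg, rfl⟩ ⟨g', hg', hres⟩
  rw [WS_eq] at hg hg'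
  obtain ⟨f₁, hf₁, rfl⟩ := hg
  obtain ⟨f₂, hf₂, rfl⟩ := hg'
  have hlev : ∀ v : V X, v.length = n → phi f₂ v = phi f₁ v := by
    intro v hv
    exact congrFun hres ⟨v, hv⟩
  have hroot : f₂ [] = f₁ [] := port_eq_of_level hlev [] (by simp only [List.length_nil]; omega)
  exact hcc ((cosetSet_eq_of_mem (hroot ▸ hf₂ []) (hf₁ [])).symm)

lemma ncard_iUnion_eq_sum {ι α : Type*} [Fintype ι] (T : ι → Set α)
    (hfin : ∀ i, (T i).Finite) (hdisj : Pairwise (Function.onFun Disjoint T)) :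
    (⋃ i, T i).ncard = ∑ i, (T i).ncard := by
  classical
  have hU : (⋃ i, T i) = ↑(Finset.univ.biUnion fun i => (hfin i).toFinset) := by
    ext x; simp [Set.Finite.mem_toFinset]
  rw [hU, Set.ncard_coe_finset, Finset.card_biUnion]
  · exact Finset.sum_congr rfl (fun i _ => (Set.ncard_eq_toFinset_card _ (hfin i)).symm)
  · intro i _ j _ hij
    rw [Function.onFun, Set.Finite.disjoint_toFinset]
    exact hdisj hij

end Union

section Main
variable [Finite X] [Nonempty X] {Q P : Subgroup (Equiv.Perm X)}

lemma fixSet_subset (G : Set (Equiv.Perm (V X))) (n : ℕ) : fixSet G n ⊆ piSet G n :=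
  fun _ hF => hF.1

lemma piSet_WS_finite {S : Set (Equiv.Perm X)} (hS : S.Nonempty) (n : ℕ) :
    (piSet (WS S) n).Finite := by
  obtain ⟨s0, hs0⟩ := hS
  rw [← (bijOn_theta hs0 n).image_eq]
  exact Set.Finite.image _ (Set.toFinite _)

lemma FPPseq_GQP_eq [Fintype (P ⧸ Q.subgroupOf P)] (hQP : Q ≤ P)
    (hnorm : ∀ p ∈ P, ∀ q ∈ Q, p * q * p⁻¹ ∈ Q) {n : ℕ} (hn : 1 ≤ n) :
    FPPseq (GQP Q P) n = ((Nat.card (P ⧸ Q.subgroupOf P) : ℝ))⁻¹ *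
      ∑ c : P ⧸ Q.subgroupOf P, FPPseq (WS (cosetSet Q P c)) n := by
  classical
  set N := Nat.card (P ⧸ Q.subgroupOf P) with hN
  set k := (Q : Set (Equiv.Perm X)).ncard with hk
  set m := Nat.card {v : V X // v.length < n} with hm
  have hk0 : 0 < k := (Set.ncard_pos (Set.toFinite _)).mpr ⟨1, Q.one_mem⟩
  have hN0 : 0 < N := Nat.card_pos
  have hpic : ∀ c, (piSet (WS (cosetSet Q P c)) n).ncard = k ^ m := fun c => by
    rw [ncard_piSet_WS (cosetSet_nonempty c), cosetSet_ncard hQP]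
  have hpiU : piSet (GQP Q P) n = ⋃ c, piSet (WS (cosetSet Q P c)) n := by
    rw [GQP_eq_iUnion hQP hnorm, piSet_iUnion]
  have hfixU : fixSet (GQP Q P) n = ⋃ c, fixSet (WS (cosetSet Q P c)) n := by
    rw [GQP_eq_iUnion hQP hnorm, fixSet_iUnion]
  have hdisj : Pairwise (Function.onFun Disjoint
      (fun c => piSet (WS (cosetSet Q P c)) n)) := fun c c' hcc =>
    piSet_WS_disjoint hn hcc
  have hpicard : (piSet (GQP Q P) n).ncard = N * k ^ m := by
    rw [hpiU, ncard_iUnion_eq_sum _ (fun c => piSet_WS_finite (cosetSet_nonempty c) n) hdisj]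
    simp only [hpic, Finset.sum_const, Finset.card_univ, smul_eq_mul]
    rw [hN, Nat.card_eq_fintype_card]
  have hfixcard : (fixSet (GQP Q P) n).ncard =
      ∑ c : P ⧸ Q.subgroupOf P, (fixSet (WS (cosetSet Q P c)) n).ncard := by
    rw [hfixU]
    exact ncard_iUnion_eq_sum _
      (fun c => (piSet_WS_finite (cosetSet_nonempty c) n).subset (fixSet_subset _ n))
      (fun c c' hcc => ((hdisj hcc).mono (fixSet_subset _ n) (fixSet_subset _ n)))
  have hkm0 : ((k : ℝ) ^ m) ≠ 0 := by positivity
  have hNR : ((N : ℝ)) ≠ 0 := by positivity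
  rw [FPPseq, hpicard, hfixcard]
  have : ∀ c : P ⧸ Q.subgroupOf P, FPPseq (WS (cosetSet Q P c)) n =
      ((fixSet (WS (cosetSet Q P c)) n).ncard : ℝ) / (k : ℝ) ^ m := fun c => by
    rw [FPPseq, hpic c]; push_cast; ring
  rw [Finset.sum_congr rfl (fun c _ => this c), ← Finset.sum_div]
  push_cast
  field_simp

end Main


/-- `FPP(G_Q^P)` is the average over the cosets `A ∈ P/Q` of `FPP(W_A)`
(all the limits exist), and is positive iff some coset has positive `FPP(W_A)`. -/
theorem stmt17 (d : ℕ) (hd : 2 ≤ d) (Q P : Subgroup (Equiv.Perm (Fin d)))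
    (hQ : Q ≠ ⊥) (hQP : Q ≤ P) (hnorm : ∀ p ∈ P, ∀ q ∈ Q, p * q * p⁻¹ ∈ Q) :
    ∃ (F : (P ⧸ Q.subgroupOf P) → ℝ) (L : ℝ),
      (∀ c : P ⧸ Q.subgroupOf P,
        Filter.Tendsto
          (FPPseq (WS {σ : Equiv.Perm (Fin d) |
            ∃ h : σ ∈ P, (QuotientGroup.mk (⟨σ, h⟩ : P) : P ⧸ Q.subgroupOf P) = c}))
          Filter.atTop (nhds (F c))) ∧
      Filter.Tendsto (FPPseq (GQP Q P)) Filter.atTop (nhds L) ∧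
      L = ((Q.relIndex P : ℝ))⁻¹ * ∑ᶠ c : P ⧸ Q.subgroupOf P, F c ∧
      (0 < L ↔ ∃ c : P ⧸ Q.subgroupOf P, 0 < F c) := by
  haveI : Nonempty (Fin d) := ⟨⟨0, by omega⟩⟩
  classical
  letI : Fintype (P ⧸ Q.subgroupOf P) := Fintype.ofFinite _
  set N := Nat.card (P ⧸ Q.subgroupOf P) with hNdef
  set F : (P ⧸ Q.subgroupOf P) → ℝ := fun c => ⨅ n, FPPseq (WS (cosetSet Q P c)) n with hFdef
  have hF0 : ∀ c, 0 ≤ F c := fun c => le_ciInf (fun n => FPPseq_nonneg _ n)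
  have hN0 : (0:ℝ) < (N : ℝ) := by exact_mod_cast (Nat.card_pos : 0 < N)
  refine ⟨F, ((N : ℝ))⁻¹ * ∑ c, F c, fun c => ?_, ?_, ?_, ?_⟩
  · exact FPPseq_WS_tendsto (cosetSet_nonempty c)
  · have h1 : Tendsto (fun n => ((N : ℝ))⁻¹ * ∑ c, FPPseq (WS (cosetSet Q P c)) n) atTop
        (nhds (((N : ℝ))⁻¹ * ∑ c, F c)) :=
      Filter.Tendsto.const_mul _
        (tendsto_finset_sum Finset.univ (fun c _ => FPPseq_WS_tendsto (cosetSet_nonempty c)))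
    refine Filter.Tendsto.congr' ?_ h1
    filter_upwards [Filter.eventually_ge_atTop 1] with n hn
    exact (FPPseq_GQP_eq hQP hnorm hn).symm
  · rw [finsum_eq_sum_of_fintype]
    rfl
  · constructor
    · intro hL
      by_contra hcon
      push_neg at hcon
      have hsum : ∑ c, F c ≤ 0 := Finset.sum_nonpos (fun c _ => hcon c)
      have : ((N : ℝ))⁻¹ * ∑ c, F c ≤ 0 :=
        mul_nonpos_iff.mpr (Or.inl ⟨le_of_lt (inv_pos.mpr hN0), hsum⟩)
      linarith
    · rintro ⟨c0, hc0⟩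
      have hsum : 0 < ∑ c, F c :=
        Finset.sum_pos' (fun c _ => hF0 c) ⟨c0, Finset.mem_univ _, hc0⟩
      exact mul_pos (inv_pos.mpr hN0) hsum


end TreePaper
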